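/- Under the Cayley graph map 𝒞(U) := Ran{v ↦ ((1+U)v, −i(1−U)v)} ⊆ H ⊕ H, the lagrangian 𝒞(U) forms a Fredholm pair with the vertical space H⁻ = 0 ⊕ H if and only if 1 + U is a Fredholm operator. In particular 𝒞(U) ∩ H⁻ is isomorphic to Ker(1+U). -/
import Mathlib


noncomputable section

variable (H : Type) [NormedAddCommGroup H] [InnerProductSpace ℂ H] [CompleteSpace H]

/-- `Ĥ = H ⊕ H` with the Hilbert (l²) structure. -/
abbrev Hh := WithLp 2 (H × H)

/-- The Cayley graph map: `𝒞(U) = Ran {v ↦ ((1+U)v, -i(1-U)v)} ⊆ H ⊕ H`. -/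
def cayleyGraph (U : H →L[ℂ] H) : Submodule ℂ (Hh H) :=
  LinearMap.range
    (((WithLp.prodContinuousLinearEquiv 2 ℂ H H).symm.toContinuousLinearMap ∘L
      ((1 + U).prod ((-Complex.I) • (1 - U)))) : H →L[ℂ] Hh H).toLinearMap

/-- The vertical space `H⁻ = 0 ⊕ H` inside `Ĥ`. -/
def vertical : Submodule ℂ (Hh H) :=
  LinearMap.range
    (((WithLp.prodContinuousLinearEquiv 2 ℂ H H).symm.toContinuousLinearMap ∘L
      (ContinuousLinearMap.inr ℂ H H)) : H →L[ℂ] Hh H).toLinearMap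

/-- A pair of lagrangians `(L₁, L₂)` is a Fredholm pair: `dim (L₁ ∩ L₂) < ∞` and
`L₁ + L₂` is closed. -/
def FredholmPairLag (L₁ L₂ : Submodule ℂ (Hh H)) : Prop :=
  FiniteDimensional ℂ ↥(L₁ ⊓ L₂) ∧ IsClosed ((L₁ ⊔ L₂ : Submodule ℂ (Hh H)) : Set (Hh H))

/-- A bounded operator `T` on `H` is Fredholm: finite-dimensional kernel and
closed range (for `1 + U` with `U` unitary the index is automatically `0`). -/
def IsFredholmOp (T : H →L[ℂ] H) : Prop :=
  FiniteDimensional ℂ ↥(LinearMap.ker (T : H →ₗ[ℂ] H)) ∧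
  FiniteDimensional ℂ (H ⧸ LinearMap.range (T : H →ₗ[ℂ] H)) ∧
  IsClosed ((LinearMap.range (T : H →ₗ[ℂ] H) : Submodule ℂ H) : Set H)

namespace Aux

variable {H}

/-- abbrev for the equiv -/
def ee : Hh H ≃L[ℂ] H × H := WithLp.prodContinuousLinearEquiv 2 ℂ H H

def Fc (U : H →L[ℂ] H) : H →L[ℂ] Hh H :=
  ((WithLp.prodContinuousLinearEquiv 2 ℂ H H).symm.toContinuousLinearMap ∘L
      ((1 + U).prod ((-Complex.I) • (1 - U))))

lemma cayley_eq (U : H →L[ℂ] H) : cayleyGraph H U = LinearMap.range (Fc U).toLinearMap := rfl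

lemma eF (U : H →L[ℂ] H) (v : H) :
    (ee : Hh H ≃L[ℂ] H × H) (Fc U v) = ((1 + U) v, -Complex.I • ((1 - U) v)) := by
  simp [Fc, ee]

lemma mem_vertical (x : Hh H) :
    x ∈ vertical H ↔ ((ee : Hh H ≃L[ℂ] H × H) x).1 = 0 := by
  constructor
  · rintro ⟨w, rfl⟩
    simp [vertical, ee]
  · intro h
    refine ⟨((ee : Hh H ≃L[ℂ] H × H) x).2, ?_⟩
    have h2 : ((0 : H), ((ee : Hh H ≃L[ℂ] H × H) x).2) = (ee : Hh H ≃L[ℂ] H × H) x := by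
      rw [← h]
    show (ee : Hh H ≃L[ℂ] H × H).symm (0, ((ee : Hh H ≃L[ℂ] H × H) x).2) = x
    rw [h2]
    exact (ee : Hh H ≃L[ℂ] H × H).symm_apply_apply x

end Aux

namespace Aux
set_option linter.unusedSectionVars false
variable {H : Type} [NormedAddCommGroup H] [InnerProductSpace ℂ H] [CompleteSpace H]

lemma mem_cayley (U : H →L[ℂ] H) (x : Hh H) :
    x ∈ cayleyGraph H U ↔ ∃ v, Fc U v = x := by
  rw [cayley_eq]; exact LinearMap.mem_range

lemma sup_eq (U : H →L[ℂ] H) :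
    cayleyGraph H U ⊔ vertical H =
      Submodule.comap ((ee : Hh H ≃L[ℂ] H × H) : Hh H →ₗ[ℂ] H × H)
        ((LinearMap.range ((1 + U : H →L[ℂ] H) : H →ₗ[ℂ] H)).prod ⊤) := by
  apply le_antisymm
  · apply sup_le
    · rintro x ⟨v, rfl⟩
      simp only [Submodule.mem_comap, Submodule.mem_prod, Submodule.mem_top, and_true]
      show ((ee : Hh H ≃L[ℂ] H × H) (Fc U v)).1 ∈ _
      rw [eF]
      exact ⟨v, rfl⟩
    · intro x hx
      simp only [Submodule.mem_comap, Submodule.mem_prod, Submodule.mem_top, and_true]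
      show ((ee : Hh H ≃L[ℂ] H × H) x).1 ∈ _
      rw [(mem_vertical x).mp hx]
      exact zero_mem _
  · intro x hx
    simp only [Submodule.mem_comap, Submodule.mem_prod, Submodule.mem_top, and_true] at hx
    obtain ⟨v, hv⟩ := hx
    rw [Submodule.mem_sup]
    refine ⟨Fc U v, (mem_cayley U _).mpr ⟨v, rfl⟩,
      (ee : Hh H ≃L[ℂ] H × H).symm (0, ((ee : Hh H ≃L[ℂ] H × H) x).2 - (-Complex.I • ((1 - U) v))),
      ?_, ?_⟩
    · rw [mem_vertical]
      simp [ee]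
    · apply (ee : Hh H ≃L[ℂ] H × H).injective
      rw [map_add, eF]
      simp only [ContinuousLinearEquiv.apply_symm_apply]
      ext
      · show (1 + U) v + 0 = _
        rw [add_zero]; exact hv
      · show -Complex.I • ((1 - U) v) + (((ee : Hh H ≃L[ℂ] H × H) x).2 - -Complex.I • ((1 - U) v)) = _
        abel

lemma sup_coe (U : H →L[ℂ] H) :
    ((cayleyGraph H U ⊔ vertical H : Submodule ℂ (Hh H)) : Set (Hh H)) =
      (ee : Hh H ≃L[ℂ] H × H) ⁻¹'
        ((LinearMap.range ((1 + U : H →L[ℂ] H) : H →ₗ[ℂ] H) : Set H) ×ˢ Set.univ) := by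
  rw [sup_eq]
  rfl

lemma closed_iff (U : H →L[ℂ] H) :
    IsClosed ((cayleyGraph H U ⊔ vertical H : Submodule ℂ (Hh H)) : Set (Hh H)) ↔
      IsClosed ((LinearMap.range ((1 + U : H →L[ℂ] H) : H →ₗ[ℂ] H) : Submodule ℂ H) : Set H) := by
  rw [sup_coe]
  rw [show (⇑(ee : Hh H ≃L[ℂ] H × H) = ⇑(ee : Hh H ≃L[ℂ] H × H).toHomeomorph) from rfl,
    Homeomorph.isClosed_preimage]
  constructor
  · intro h
    have : (LinearMap.range ((1 + U : H →L[ℂ] H) : H →ₗ[ℂ] H) : Set H)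
        = (fun x : H => (x, (0 : H))) ⁻¹'
          ((LinearMap.range ((1 + U : H →L[ℂ] H) : H →ₗ[ℂ] H) : Set H) ×ˢ Set.univ) := by
      ext x; simp
    rw [this]
    exact h.preimage (Continuous.prodMk continuous_id continuous_const)
  · intro h
    exact h.prod isClosed_univ

end Aux

namespace Aux
set_option linter.unusedSectionVars false
variable {H : Type} [NormedAddCommGroup H] [InnerProductSpace ℂ H] [CompleteSpace H]

lemma Fc_mem_inf (U : H →L[ℂ] H) (v : H)
    (hv : v ∈ LinearMap.ker ((1 + U : H →L[ℂ] H) : H →ₗ[ℂ] H)) :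
    Fc U v ∈ cayleyGraph H U ⊓ vertical H := by
  refine Submodule.mem_inf.mpr ⟨⟨v, rfl⟩, ?_⟩
  rw [mem_vertical, eF]
  exact hv

def interMap (U : H →L[ℂ] H) :
    ↥(LinearMap.ker ((1 + U : H →L[ℂ] H) : H →ₗ[ℂ] H)) →ₗ[ℂ]
      ↥(cayleyGraph H U ⊓ vertical H) :=
  LinearMap.codRestrict _
    ((Fc U).toLinearMap.comp (Submodule.subtype _))
    (fun v => Fc_mem_inf U v.1 v.2)

lemma interMap_bijective (U : H →L[ℂ] H) : Function.Bijective (interMap U) := by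
  constructor
  · intro a b hab
    have h : Fc U a.1 = Fc U b.1 := congrArg Subtype.val hab
    have h2 := congrArg (ee : Hh H ≃L[ℂ] H × H) h
    rw [eF, eF] at h2
    have hI : (-Complex.I : ℂ) ≠ 0 := by simp [Complex.I_ne_zero]
    have h3 : (1 - U) a.1 = (1 - U) b.1 :=
      smul_right_injective H hI (congrArg Prod.snd h2)
    have ha : a.1 + U a.1 = 0 := by
      have h0 : (1 + U) a.1 = 0 := a.2
      rw [ContinuousLinearMap.add_apply, ContinuousLinearMap.one_apply] at h0
      exact h0
    have hb : b.1 + U b.1 = 0 := by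
      have h0 : (1 + U) b.1 = 0 := b.2
      rw [ContinuousLinearMap.add_apply, ContinuousLinearMap.one_apply] at h0
      exact h0
    have h3' : a.1 - U a.1 = b.1 - U b.1 := by
      simpa [ContinuousLinearMap.sub_apply] using h3
    have key : a.1 + a.1 = b.1 + b.1 := by
      have h4 : (a.1 - U a.1) + (a.1 + U a.1) = (b.1 - U b.1) + (b.1 + U b.1) := by
        rw [h3', ha, hb]
      abel_nf at h4 ⊢
      exact h4
    have key2 : (2 : ℂ) • a.1 = (2 : ℂ) • b.1 := by
      rw [two_smul, two_smul]; exact key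
    exact Subtype.ext (smul_right_injective H two_ne_zero key2)
  · rintro ⟨x, hxC, hxV⟩
    obtain ⟨v, hv⟩ := (mem_cayley U x).mp hxC
    have hT : (1 + U) v = 0 := by
      have := (mem_vertical x).mp hxV
      rw [← hv, eF] at this
      exact this
    exact ⟨⟨v, hT⟩, Subtype.ext hv⟩

def interEquiv (U : H →L[ℂ] H) :
    ↥(LinearMap.ker ((1 + U : H →L[ℂ] H) : H →ₗ[ℂ] H)) ≃ₗ[ℂ]
      ↥(cayleyGraph H U ⊓ vertical H) :=
  LinearEquiv.ofBijective (interMap U) (interMap_bijective U)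

end Aux

namespace Aux
set_option linter.unusedSectionVars false
variable {H : Type} [NormedAddCommGroup H] [InnerProductSpace ℂ H] [CompleteSpace H]

open scoped InnerProductSpace

lemma orth_range (U : H →L[ℂ] H) (hU : U ∈ unitary (H →L[ℂ] H)) :
    (LinearMap.range ((1 + U : H →L[ℂ] H) : H →ₗ[ℂ] H))ᗮ =
      LinearMap.ker ((1 + U : H →L[ℂ] H) : H →ₗ[ℂ] H) := by
  obtain ⟨hU1, hU2⟩ := Unitary.mem_iff.mp hU
  have hstar : star U = ContinuousLinearMap.adjoint U := ContinuousLinearMap.star_eq_adjoint U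
  ext x
  rw [Submodule.mem_orthogonal, LinearMap.mem_ker]
  constructor
  · intro h
    have key : ∀ v : H, ⟪v, x + ContinuousLinearMap.adjoint U x⟫_ℂ = 0 := by
      intro v
      have h1 := h ((1 + U) v) ⟨v, rfl⟩
      rw [ContinuousLinearMap.add_apply, ContinuousLinearMap.one_apply] at h1
      rw [inner_add_right, ContinuousLinearMap.adjoint_inner_right]
      rw [inner_add_left] at h1
      exact h1
    have h0 : x + ContinuousLinearMap.adjoint U x = 0 := by
      have := key (x + ContinuousLinearMap.adjoint U x)
      rwa [inner_self_eq_zero] at this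
    have h0' := congrArg U h0
    rw [map_add, map_zero] at h0'
    have hUadj : U (ContinuousLinearMap.adjoint U x) = x := by
      have := congrFun (congrArg DFunLike.coe hU2) x
      rw [← hstar]
      exact this
    show (1 + U) x = 0
    rw [ContinuousLinearMap.add_apply, ContinuousLinearMap.one_apply]
    rw [hUadj] at h0'
    rw [add_comm]
    exact h0'
  · intro h u hu
    obtain ⟨v, rfl⟩ := hu
    have h' : x + U x = 0 := by
      have h0 : (1 + U) x = 0 := h
      rwa [ContinuousLinearMap.add_apply, ContinuousLinearMap.one_apply] at h0
    have hadj : x + ContinuousLinearMap.adjoint U x = 0 := by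
      have h1 := congrArg (ContinuousLinearMap.adjoint U) h'
      rw [map_add, map_zero] at h1
      have h2 : ContinuousLinearMap.adjoint U (U x) = x := by
        have := congrFun (congrArg DFunLike.coe hU1) x
        rw [← hstar]
        exact this
      rw [h2] at h1
      rwa [add_comm] at h1
    show ⟪(((1 + U : H →L[ℂ] H) : H →ₗ[ℂ] H)) v, x⟫_ℂ = 0
    rw [ContinuousLinearMap.coe_coe, ContinuousLinearMap.add_apply,
      ContinuousLinearMap.one_apply, inner_add_left,
      ← ContinuousLinearMap.adjoint_inner_right, ← inner_add_right, hadj, inner_zero_right]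

end Aux

namespace Aux
set_option linter.unusedSectionVars false
variable {H : Type} [NormedAddCommGroup H] [InnerProductSpace ℂ H] [CompleteSpace H]

lemma coker_findim (U : H →L[ℂ] H) (hU : U ∈ unitary (H →L[ℂ] H))
    (hclosed : IsClosed ((LinearMap.range ((1 + U : H →L[ℂ] H) : H →ₗ[ℂ] H) :
      Submodule ℂ H) : Set H))
    (hker : FiniteDimensional ℂ ↥(LinearMap.ker ((1 + U : H →L[ℂ] H) : H →ₗ[ℂ] H))) :
    FiniteDimensional ℂ (H ⧸ LinearMap.range ((1 + U : H →L[ℂ] H) : H →ₗ[ℂ] H)) := by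
  set K := LinearMap.range ((1 + U : H →L[ℂ] H) : H →ₗ[ℂ] H) with hK
  haveI : CompleteSpace K := hclosed.completeSpace_coe
  have hc : IsCompl K Kᗮ := Submodule.isCompl_orthogonal_of_hasOrthogonalProjection
  haveI : FiniteDimensional ℂ ↥(Kᗮ) := by
    rw [hK, orth_range U hU]
    exact hker
  exact (Submodule.quotientEquivOfIsCompl K Kᗮ hc).symm.finiteDimensional

end Aux

/-- for a unitary `U`, the lagrangian `𝒞(U)` forms a Fredholm pair with
the vertical space `H⁻ = 0 ⊕ H` if and only if `1 + U` is Fredholm; in particular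
`𝒞(U) ∩ H⁻` is isomorphic to `Ker (1 + U)`. -/
theorem cayleyGraph_fredholmPair_iff (U : H →L[ℂ] H) (hU : U ∈ unitary (H →L[ℂ] H)) :
    (FredholmPairLag H (cayleyGraph H U) (vertical H) ↔ IsFredholmOp H (1 + U)) ∧
    Nonempty (↥(cayleyGraph H U ⊓ vertical H) ≃ₗ[ℂ]
      ↥(LinearMap.ker ((1 + U : H →L[ℂ] H) : H →ₗ[ℂ] H))) := by
  constructor
  · constructor
    · rintro ⟨hfin, hclos⟩
      haveI := hfin
      have hker : FiniteDimensional ℂ ↥(LinearMap.ker ((1 + U : H →L[ℂ] H) : H →ₗ[ℂ] H)) :=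
        (Aux.interEquiv U).symm.finiteDimensional
      have hcl := (Aux.closed_iff U).mp hclos
      exact ⟨hker, Aux.coker_findim U hU hcl hker, hcl⟩
    · rintro ⟨hker, _, hcl⟩
      haveI := hker
      exact ⟨(Aux.interEquiv U).finiteDimensional, (Aux.closed_iff U).mpr hcl⟩
  · exact ⟨(Aux.interEquiv U).symm⟩
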